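/- arXiv:1009.3017 — 2 statements merged into one kernel-verified Lean document; each statement's English description precedes it below -/
import Mathlib

section
/- For every positive integer n, the number of subgroups of ℤ × ℤ of index n equals σ₁(n), the sum of the divisors of n. -/
/-!
A subgroup `H ≤ ℤ²` of finite index is the subgroup generated by `(a, b)` and `(0, d)`, where
`a` is the index of the projection `fst(H)`, `d` the index of the vertical part `H ∩ (0 × ℤ)`,
and `(a, b) ∈ H` with `0 ≤ b < d` (Hermite normal form); the triple `(a, b, d)` is recovered
from `H`. The index is multiplicative along the exact sequence `0 → ℤ → ℤ² → ℤ → 0`, so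
`[ℤ² : H] = a * d`, and the subgroups of index `n` are counted by `∑_{a * d = n} d = σ₁(n)`.
-/

namespace Subgroup

variable {G G' : Type*} [Group G] [Group G']

@[to_additive]
theorem eq_of_le_of_index_eq {H K : Subgroup G} (h : H ≤ K) (hK : K.index ≠ 0)
    (hHK : H.index = K.index) : H = K :=
  le_antisymm h (relIndex_eq_one.1 ((mul_eq_right₀ hK).1 ((relIndex_mul_index h).trans hHK)))

@[to_additive index_eq_relIndex_ker_mul_index_map]
theorem index_eq_relIndex_ker_mul_index_map (H : Subgroup G) [H.Normal] {f : G →* G'}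
    (hf : Function.Surjective f) : H.index = H.relIndex f.ker * (H.map f).index := by
  rw [index_map, f.range_eq_top_of_surjective hf, index_top, mul_one, ← relIndex_sup_left,
    relIndex_mul_index le_sup_left]

@[to_additive index_eq_index_comap_inr_mul_index_map_fst]
theorem index_eq_index_comap_inr_mul_index_map_fst (H : Subgroup (G × G')) [H.Normal] :
    H.index = (H.comap (MonoidHom.inr G G')).index * (H.map (MonoidHom.fst G G')).index := by
  rw [H.index_eq_relIndex_ker_mul_index_map (f := MonoidHom.fst G G') Prod.fst_surjective,
    ← relIndex_top_right (comap _ _), relIndex_comap, MonoidHom.ker_fst]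
  congr 2
  ext ⟨x, y⟩
  simp [eq_comm, mem_prod]

end Subgroup

theorem Int.zmultiples_index (K : AddSubgroup ℤ) : AddSubgroup.zmultiples (K.index : ℤ) = K := by
  obtain ⟨g, rfl⟩ := Int.subgroup_cyclic K
  rw [← AddSubgroup.zmultiples_eq_closure, Int.index_zmultiples, Int.zmultiples_natAbs]

theorem Int.mem_addSubgroup_iff_index_dvd {K : AddSubgroup ℤ} {x : ℤ} :
    x ∈ K ↔ (K.index : ℤ) ∣ x := by
  rw [← Int.mem_zmultiples_iff, Int.zmultiples_index]

def hermiteSubgroup (a b d : ℤ) : AddSubgroup (ℤ × ℤ) :=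
  AddSubgroup.closure {(a, b), (0, d)}

section hermiteSubgroup

variable {a b d : ℤ}

theorem mem_hermiteSubgroup {z : ℤ × ℤ} :
    z ∈ hermiteSubgroup a b d ↔ ∃ s, z.1 = s * a ∧ d ∣ z.2 - s * b := by
  rw [hermiteSubgroup, AddSubgroup.mem_closure_pair]
  constructor
  · rintro ⟨s, t, rfl⟩
    exact ⟨s, by simp, t, by
      simp only [Prod.smul_mk, Int.zsmul_eq_mul, mul_zero, Prod.mk_add_mk, add_zero,
        add_sub_cancel_left]
      ring⟩
  · rintro ⟨s, h1, t, h2⟩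
    exact ⟨s, t, Prod.ext (by simp [h1]) (by
      simp only [Prod.smul_mk, Int.zsmul_eq_mul, mul_zero, Prod.mk_add_mk, add_zero]
      linarith)⟩

theorem map_fst_hermiteSubgroup :
    (hermiteSubgroup a b d).map (AddMonoidHom.fst ℤ ℤ) = .zmultiples a := by
  ext x
  simp only [AddSubgroup.mem_map, Int.mem_zmultiples_iff, Prod.exists, AddMonoidHom.coe_fst]
  constructor
  · rintro ⟨x, y, hxy, rfl⟩
    obtain ⟨s, hs, -⟩ := mem_hermiteSubgroup.1 hxy
    exact ⟨s, hs.trans (mul_comm _ _)⟩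
  · rintro ⟨s, rfl⟩
    exact ⟨_, s * b, mem_hermiteSubgroup.2 ⟨s, mul_comm _ _, by simp⟩, rfl⟩

theorem comap_inr_hermiteSubgroup (ha : a ≠ 0) :
    (hermiteSubgroup a b d).comap (AddMonoidHom.inr ℤ ℤ) = .zmultiples d := by
  ext y
  simp only [AddSubgroup.mem_comap, AddMonoidHom.inr_apply, Int.mem_zmultiples_iff,
    mem_hermiteSubgroup]
  constructor
  · rintro ⟨s, hs, hdvd⟩
    obtain rfl : s = 0 := by simpa [ha, eq_comm] using hs
    simpa using hdvd
  · exact fun h => ⟨0, by simp, by simpa using h⟩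

theorem index_hermiteSubgroup (ha : a ≠ 0) :
    (hermiteSubgroup a b d).index = d.natAbs * a.natAbs := by
  rw [AddSubgroup.index_eq_index_comap_inr_mul_index_map_fst, comap_inr_hermiteSubgroup ha,
    map_fst_hermiteSubgroup, Int.index_zmultiples, Int.index_zmultiples]

theorem mk_mem_hermiteSubgroup (ha : a ≠ 0) {y : ℤ} :
    (a, y) ∈ hermiteSubgroup a b d ↔ d ∣ y - b := by
  rw [mem_hermiteSubgroup]
  constructor
  · rintro ⟨s, hs, hdvd⟩
    obtain rfl : s = 1 := by
      simpa [ha] using (mul_eq_mul_right_iff.1 (hs.symm.trans (one_mul a).symm))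
    simpa using hdvd
  · exact fun h => ⟨1, by simp, by simpa using h⟩

end hermiteSubgroup

theorem eq_of_hermiteSubgroup_eq {a a' d d' : ℕ} {b b' : ℤ} (ha : a ≠ 0)
    (hb : b ∈ Set.Ico 0 (d : ℤ)) (hb' : b' ∈ Set.Ico 0 (d' : ℤ))
    (h : hermiteSubgroup a b d = hermiteSubgroup a' b' d') :
    a = a' ∧ b = b' ∧ d = d' := by
  have haa' : a = a' := by
    simpa [map_fst_hermiteSubgroup]
      using congrArg (fun H => (H.map (AddMonoidHom.fst ℤ ℤ)).index) h
  subst haa'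
  have ha : (a : ℤ) ≠ 0 := mod_cast ha
  have hdd' : d = d' := by
    simpa [comap_inr_hermiteSubgroup ha, comap_inr_hermiteSubgroup (b := b') ha]
      using congrArg (fun H => (H.comap (AddMonoidHom.inr ℤ ℤ)).index) h
  subst hdd'
  have hmod : b ≡ b' [ZMOD d] := by
    rw [Int.modEq_iff_dvd, ← mk_mem_hermiteSubgroup ha, h, mk_mem_hermiteSubgroup ha, sub_self]
    exact dvd_zero _
  refine ⟨rfl, ?_, rfl⟩
  rwa [Int.ModEq, Int.emod_eq_of_lt hb.1 hb.2, Int.emod_eq_of_lt hb'.1 hb'.2] at hmod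

theorem exists_hermiteSubgroup_eq (H : AddSubgroup (ℤ × ℤ)) (hH : H.index ≠ 0) :
    ∃ a d : ℕ, a * d = H.index ∧ ∃ b ∈ Set.Ico 0 (d : ℤ), H = hermiteSubgroup a b d := by
  set a := (H.map (AddMonoidHom.fst ℤ ℤ)).index
  set d := (H.comap (AddMonoidHom.inr ℤ ℤ)).index
  have hda : H.index = d * a := H.index_eq_index_comap_inr_mul_index_map_fst
  have ha : a ≠ 0 := right_ne_zero_of_mul (hda ▸ hH)
  have hd : (0 : ℤ) < d := by have := left_ne_zero_of_mul (hda ▸ hH); omega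
  have hvert {y : ℤ} (hy : (d : ℤ) ∣ y) : ((0 : ℤ), y) ∈ H :=
    Int.mem_addSubgroup_iff_index_dvd.2 hy
  obtain ⟨⟨x, b₀⟩, hb₀, hx⟩ : (a : ℤ) ∈ H.map (AddMonoidHom.fst ℤ ℤ) :=
    Int.mem_addSubgroup_iff_index_dvd.2 dvd_rfl
  obtain rfl : x = a := hx
  have hb : ((a : ℤ), b₀ % d) ∈ H := by
    simpa using add_mem hb₀ (hvert (y := b₀ % d - b₀) ⟨-(b₀ / d), by rw [Int.emod_def]; ring⟩)
  refine ⟨a, d, by rw [hda, mul_comm], b₀ % d,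
    ⟨Int.emod_nonneg _ hd.ne', Int.emod_lt_of_pos _ hd⟩,
    (AddSubgroup.eq_of_le_of_index_eq ?_ hH ?_).symm⟩
  · rw [hermiteSubgroup, AddSubgroup.closure_le, Set.insert_subset_iff, Set.singleton_subset_iff]
    exact ⟨hb, hvert dvd_rfl⟩
  · rw [index_hermiteSubgroup (mod_cast ha), hda, Int.natAbs_natCast, Int.natAbs_natCast]

def hermiteSubgroupOfIndex (n : ℕ) (p : Σ q : n.divisorsAntidiagonal, Fin q.1.2) :
    {H : AddSubgroup (ℤ × ℤ) // H.index = n} :=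
  ⟨hermiteSubgroup p.1.1.1 p.2 p.1.1.2, by
    have ha : (p.1.1.1 : ℤ) ≠ 0 := mod_cast Nat.left_ne_zero_of_mem_divisorsAntidiagonal p.1.2
    rw [index_hermiteSubgroup ha, Int.natAbs_natCast, Int.natAbs_natCast, mul_comm]
    exact (Nat.mem_divisorsAntidiagonal.1 p.1.2).1⟩

theorem hermiteSubgroupOfIndex_bijective {n : ℕ} (hn : n ≠ 0) :
    Function.Bijective (hermiteSubgroupOfIndex n) := by
  constructor
  · rintro ⟨⟨⟨a, d⟩, hp⟩, c⟩ ⟨⟨⟨a', d'⟩, hp'⟩, c'⟩ h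
    obtain ⟨rfl, hc, rfl⟩ :=
      eq_of_hermiteSubgroup_eq (Nat.left_ne_zero_of_mem_divisorsAntidiagonal hp)
      ⟨c.val.cast_nonneg, by exact_mod_cast c.isLt⟩ ⟨c'.val.cast_nonneg, by exact_mod_cast c'.isLt⟩
      (congrArg Subtype.val h)
    obtain rfl : c = c' := Fin.ext (by exact_mod_cast hc)
    rfl
  · rintro ⟨H, rfl⟩
    obtain ⟨a, d, had, b, hb, hH⟩ := exists_hermiteSubgroup_eq H hn
    have hbd : b.toNat < d := by have := hb.1; have := hb.2; omega
    refine ⟨⟨⟨(a, d), Nat.mem_divisorsAntidiagonal.2 ⟨had, hn⟩⟩, ⟨b.toNat, hbd⟩⟩, ?_⟩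
    ext1
    change hermiteSubgroup a (b.toNat : ℤ) d = H
    rw [Int.toNat_of_nonneg hb.1, hH]

theorem card_sigma_fin_divisorsAntidiagonal (n : ℕ) :
    Nat.card (Σ q : n.divisorsAntidiagonal, Fin q.1.2) = ArithmeticFunction.sigma 1 n := by
  rw [Nat.card_sigma]
  simp only [Nat.card_eq_fintype_card, Fintype.card_fin]
  rw [Finset.sum_coe_sort n.divisorsAntidiagonal Prod.snd, ArithmeticFunction.sigma_one_apply]
  exact Nat.sum_divisorsAntidiagonal' (fun _ d => d)

open ArithmeticFunction in
/-- The number of subgroups of `ℤ × ℤ` of index `n` equals `σ₁(n)`. -/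
theorem stmt0 (n : ℕ) (hn : 0 < n) :
    Nat.card {H : AddSubgroup (ℤ × ℤ) // H.index = n} = sigma 1 n := by
  rw [← Nat.card_eq_of_bijective _ (hermiteSubgroupOfIndex_bijective hn.ne'),
    card_sigma_fin_divisorsAntidiagonal]
end

section
/- For every d ≥ 1, the arithmetic function sending n to the number of subgroups of ℤ^d of index n is multiplicative: if gcd(m, n) = 1, then the number of index-mn subgroups equals the product of the number of index-m subgroups and the number of index-n subgroups. -/
section Aux

variable {G : Type*} [AddCommGroup G]

/-- If `c • g ∈ K` for all `g` and `K` has finite index, then `K.index` is coprime to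
anything coprime to `c`. -/
private lemma aux_coprime (K : AddSubgroup G) (c t : ℕ) (hfin : K.index ≠ 0)
    (hc : ∀ g : G, c • g ∈ K) (hct : Nat.Coprime c t) : Nat.Coprime K.index t := by
  by_contra hcontra
  obtain ⟨p, hp, hpK, hpt⟩ := Nat.Prime.not_coprime_iff_dvd.mp hcontra
  have hfin' : Finite (G ⧸ K) := Nat.finite_of_card_ne_zero hfin
  have := Fintype.ofFinite (G ⧸ K)
  have hpfact : Fact p.Prime := ⟨hp⟩
  have hpcard : p ∣ Fintype.card (G ⧸ K) := by
    rwa [← Nat.card_eq_fintype_card, ← AddSubgroup.index]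
  obtain ⟨x, hx⟩ := exists_prime_addOrderOf_dvd_card p hpcard
  have hcx : c • x = 0 := by
    induction x using QuotientAddGroup.induction_on with
    | H g =>
      rw [← QuotientAddGroup.mk_nsmul]
      exact (QuotientAddGroup.eq_zero_iff _).mpr (hc g)
  have hpc : p ∣ c := hx ▸ addOrderOf_dvd_of_nsmul_eq_zero hcx
  have : p ∣ 1 := hct ▸ Nat.dvd_gcd hpc hpt
  exact hp.one_lt.ne' (Nat.dvd_one.mp this)

/-- `H + cG` as an `AddSubgroup`. -/
private def addJoin (H : AddSubgroup G) (c : ℕ) : AddSubgroup G where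
  carrier := {x | ∃ h ∈ H, ∃ g : G, x = h + c • g}
  zero_mem' := ⟨0, H.zero_mem, 0, by simp⟩
  add_mem' := by
    rintro x y ⟨h1, hh1, g1, rfl⟩ ⟨h2, hh2, g2, rfl⟩
    exact ⟨h1 + h2, H.add_mem hh1 hh2, g1 + g2, by rw [smul_add]; abel⟩
  neg_mem' := by
    rintro x ⟨h1, hh1, g1, rfl⟩
    exact ⟨-h1, H.neg_mem hh1, -g1, by rw [smul_neg]; abel⟩

private lemma le_addJoin (H : AddSubgroup G) (c : ℕ) : H ≤ addJoin H c :=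
  fun x hx => ⟨x, hx, 0, by simp⟩

private lemma nsmul_mem_addJoin (H : AddSubgroup G) (c : ℕ) (g : G) : c • g ∈ addJoin H c :=
  ⟨0, H.zero_mem, g, by simp⟩

private lemma index_addJoin {H : AddSubgroup G} {m n : ℕ} (hm : 0 < m) (hn : 0 < n)
    (hco : Nat.Coprime m n) (hH : H.index = m * n) : (addJoin H m).index = m := by
  set A := addJoin H m with hA
  have hle : H ≤ A := le_addJoin H m
  have hrk : H.relIndex A * A.index = m * n := by
    rw [AddSubgroup.relIndex_mul_index hle, hH]
  have hmn : m * n ≠ 0 := by positivity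
  have hk0 : A.index ≠ 0 := fun h0 => hmn (by rw [← hrk, h0, mul_zero])
  have hr0 : H.relIndex A ≠ 0 := fun h0 => hmn (by rw [← hrk, h0, zero_mul])
  -- every element of G satisfies m • g ∈ A, so A.index is coprime to n
  have hkn : Nat.Coprime A.index n :=
    aux_coprime A m n hk0 (nsmul_mem_addJoin H m) hco
  -- inside A, every element satisfies n • a ∈ H, so relindex is coprime to m
  have hmnG : ∀ g : G, (m * n) • g ∈ H := by
    intro g
    have := AddSubgroup.nsmul_index_mem H g
    rwa [hH] at this
  have hrm : Nat.Coprime (H.relIndex A) m := by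
    refine aux_coprime (H.addSubgroupOf A) n m hr0 ?_ hco.symm
    rintro ⟨a, h1, hh1, g1, rfl⟩
    rw [AddSubgroup.mem_addSubgroupOf]
    show n • (h1 + m • g1) ∈ H
    have : n • (h1 + m • g1) = n • h1 + (m * n) • g1 := by
      rw [smul_add, ← mul_smul, mul_comm]
    rw [this]
    exact H.add_mem (H.nsmul_mem hh1 n) (hmnG g1)
  -- A.index ∣ m
  have hkm : A.index ∣ m := hkn.dvd_of_dvd_mul_right ⟨H.relIndex A, by rw [← hrk]; ring⟩
  -- relindex ∣ n
  have hrn : H.relIndex A ∣ n := by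
    refine hrm.dvd_of_dvd_mul_right ?_
    exact ⟨A.index, by rw [hrk]; ring⟩
  -- conclude
  obtain ⟨s, hs⟩ := hrn
  have : m * (H.relIndex A * s) = H.relIndex A * A.index := by rw [← hs, hrk]
  have hmk : m ∣ A.index := by
    refine ⟨s, Nat.eq_of_mul_eq_mul_left (Nat.pos_of_ne_zero hr0) ?_⟩
    calc H.relIndex A * A.index = m * (H.relIndex A * s) := this.symm
    _ = H.relIndex A * (m * s) := by ring
  exact Nat.dvd_antisymm hkm hmk

private lemma bezout {m n : ℕ} (hco : Nat.Coprime m n) :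
    ∃ u v : ℤ, (m : ℤ) * u + (n : ℤ) * v = 1 := by
  refine ⟨Nat.gcdA m n, Nat.gcdB m n, ?_⟩
  have := Nat.gcd_eq_gcd_ab m n
  rw [hco.gcd_eq_one] at this
  exact_mod_cast this.symm

private lemma addJoin_inf {H : AddSubgroup G} {m n : ℕ}
    (hco : Nat.Coprime m n) (hH : H.index = m * n) :
    addJoin H m ⊓ addJoin H n = H := by
  apply le_antisymm
  · rintro x ⟨⟨h1, hh1, g1, rfl⟩, h2, hh2, g2, hx2⟩
    have hmnG : ∀ g : G, (m * n) • g ∈ H := by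
      intro g
      have := AddSubgroup.nsmul_index_mem H g
      rwa [hH] at this
    obtain ⟨u, v, huv⟩ := bezout hco
    set x := h1 + m • g1 with hxdef
    have hmx : m • x ∈ H := by
      rw [hx2, smul_add, ← mul_smul]
      exact H.add_mem (H.nsmul_mem hh2 m) (hmnG g2)
    have hnx : n • x ∈ H := by
      rw [hxdef, smul_add, ← mul_smul, mul_comm n m]
      exact H.add_mem (H.nsmul_mem hh1 n) (hmnG g1)
    have : x = u • ((m : ℤ) • x) + v • ((n : ℤ) • x) := by
      rw [← mul_smul, ← mul_smul, ← add_smul]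
      have : u * (m : ℤ) + v * (n : ℤ) = 1 := by linarith [huv]
      rw [this, one_smul]
    rw [this]
    refine H.add_mem (H.zsmul_mem ?_ u) (H.zsmul_mem ?_ v)
    · rwa [natCast_zsmul]
    · rwa [natCast_zsmul]
  · exact le_inf (le_addJoin H m) (le_addJoin H n)

private lemma addJoin_inf_left {A B : AddSubgroup G} {m n : ℕ}
    (hco : Nat.Coprime m n) (hA : A.index = m) (hB : B.index = n) :
    addJoin (A ⊓ B) m = A := by
  apply le_antisymm
  · rintro x ⟨h1, hh1, g1, rfl⟩
    have hmA : m • g1 ∈ A := by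
      have := AddSubgroup.nsmul_index_mem A g1
      rwa [hA] at this
    exact A.add_mem hh1.1 hmA
  · intro a ha
    obtain ⟨u, v, huv⟩ := bezout hco
    have hna : n • a ∈ A ⊓ B := by
      refine ⟨A.nsmul_mem ha n, ?_⟩
      have := AddSubgroup.nsmul_index_mem B a
      rwa [hB] at this
    refine ⟨v • (n • a), (A ⊓ B).zsmul_mem hna v, u • a, ?_⟩
    have : a = ((m : ℤ) * u + (n : ℤ) * v) • a := by rw [huv, one_smul]
    calc a = ((m : ℤ) * u + (n : ℤ) * v) • a := this
    _ = v • ((n:ℕ) • a) + m • u • a := by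
        rw [add_smul, mul_smul, mul_comm (n:ℤ) v, mul_smul, natCast_zsmul,
          natCast_zsmul, add_comm]

private lemma index_inf {A B : AddSubgroup G} {m n : ℕ} (hm : 0 < m) (hn : 0 < n)
    (hco : Nat.Coprime m n) (hA : A.index = m) (hB : B.index = n) :
    (A ⊓ B).index = m * n := by
  have hAf : A.FiniteIndex := ⟨by omega⟩
  have hBf : B.FiniteIndex := ⟨by omega⟩
  have hfin : (A ⊓ B).FiniteIndex := inferInstance
  have hmd : m ∣ (A ⊓ B).index := hA ▸ AddSubgroup.index_dvd_of_le inf_le_left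
  have hnd : n ∣ (A ⊓ B).index := hB ▸ AddSubgroup.index_dvd_of_le inf_le_right
  have hmnd : m * n ∣ (A ⊓ B).index := hco.mul_dvd_of_dvd_of_dvd hmd hnd
  have hle : (A ⊓ B).index ≤ m * n := by
    have := AddSubgroup.index_inf_le (H := A) (K := B)
    rwa [hA, hB] at this
  exact Nat.le_antisymm hle
    (Nat.le_of_dvd (Nat.pos_of_ne_zero hfin.index_ne_zero) hmnd)

/-- The bijection between index-`mn` subgroups and pairs of index-`m`, index-`n` subgroups. -/
private noncomputable def subgroupEquiv (m n : ℕ) (hm : 0 < m) (hn : 0 < n)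
    (hco : Nat.Coprime m n) :
    {H : AddSubgroup G // H.index = m * n} ≃
      {H : AddSubgroup G // H.index = m} × {H : AddSubgroup G // H.index = n} where
  toFun H := (⟨addJoin H.1 m, index_addJoin hm hn hco H.2⟩,
    ⟨addJoin H.1 n, index_addJoin hn hm hco.symm (by rw [H.2, mul_comm])⟩)
  invFun P := ⟨P.1.1 ⊓ P.2.1, index_inf hm hn hco P.1.2 P.2.2⟩
  left_inv H := Subtype.ext (addJoin_inf hco H.2)
  right_inv P := by
    refine Prod.ext (Subtype.ext ?_) (Subtype.ext ?_)
    · exact addJoin_inf_left hco P.1.2 P.2.2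
    · show addJoin ((P.1.1 : AddSubgroup G) ⊓ P.2.1) n = P.2.1
      rw [inf_comm]
      exact addJoin_inf_left hco.symm P.2.2 P.1.2

end Aux

/-- The arithmetic function counting index-`n` subgroups of `ℤ^d` is multiplicative. -/
theorem stmt2 (d : ℕ) (hd : 1 ≤ d) (m n : ℕ) (hm : 0 < m) (hn : 0 < n)
    (h : Nat.Coprime m n) :
    Nat.card {H : AddSubgroup (Fin d → ℤ) // H.index = m * n} =
      Nat.card {H : AddSubgroup (Fin d → ℤ) // H.index = m} *
        Nat.card {H : AddSubgroup (Fin d → ℤ) // H.index = n} := by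
  rw [Nat.card_congr (subgroupEquiv m n hm hn h), Nat.card_prod]
end
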